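/- Fix an integer k ≥ 1 and a horizon T ≥ 1. Define the scalar kernel H(t,τ) := 1/(t+1) if τ < t and H(t,τ) := 0 otherwise, for indices 0 ≤ τ, t ≤ T−1, and define the kernel product (AB)(t,τ) := ∑_{j=τ}^{t} A(t,j)·B(j,τ). Then for every pair 0 ≤ τ < t ≤ T−1, the k-fold kernel power satisfies (H^k)(t,τ) ≤ (1/(t+1)) · H_t^{k−1}/(k−1)!, where H_t := ∑_{m=1}^{t} 1/m denotes the t-th harmonic number (with H_0 := 0). -/
import Mathlib


/-- The harmonic-decay kernel `H(t,τ) = 1/(t+1)` for `τ < t`, `0` otherwise. -/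
noncomputable def Hker : ℕ → ℕ → ℝ :=
  fun t τ => if τ < t then 1 / ((t : ℝ) + 1) else 0

/-- Lower-triangular kernel product `(AB)(t,τ) = ∑_{j=τ}^{t} A(t,j)·B(j,τ)`. -/
noncomputable def kmul (A B : ℕ → ℕ → ℝ) : ℕ → ℕ → ℝ :=
  fun t τ => ∑ j ∈ Finset.Icc τ t, A t j * B j τ

/-- `k`-fold kernel power: `kpow A 1 = A`, `kpow A (k+1) = A · (kpow A k)`;
`kpow A 0` is the identity kernel. -/
noncomputable def kpow (A : ℕ → ℕ → ℝ) : ℕ → ℕ → ℕ → ℝ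
  | 0 => fun t τ => if t = τ then 1 else 0
  | 1 => A
  | (k + 2) => kmul A (kpow A (k + 1))

/-- The real-valued `t`-th harmonic number `H_t = ∑_{m=1}^{t} 1/m`, `H_0 = 0`. -/
noncomputable def harmonicR (t : ℕ) : ℝ :=
  ∑ m ∈ Finset.Icc 1 t, 1 / (m : ℝ)

lemma harmonicR_nonneg (t : ℕ) : 0 ≤ harmonicR t :=
  Finset.sum_nonneg fun m _ => by positivity

lemma harmonicR_mono : Monotone harmonicR := by
  intro a b hab
  exact Finset.sum_le_sum_of_subset_of_nonneg
    (Finset.Icc_subset_Icc_right hab) (fun m _ _ => by positivity)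

lemma harmonicR_succ (j : ℕ) : harmonicR (j + 1) = harmonicR j + 1 / ((j : ℝ) + 1) := by
  unfold harmonicR
  rw [Finset.sum_Icc_succ_top (by omega : 1 ≤ j + 1)]
  push_cast
  ring

lemma Hker_diag (t : ℕ) : Hker t t = 0 := by simp [Hker]

lemma kpow_diag (k : ℕ) (hk : 1 ≤ k) (τ : ℕ) : kpow Hker k τ τ = 0 := by
  match k, hk with
  | 1, _ => simpa [kpow] using Hker_diag τ
  | (n+2), _ => simp [kpow, kmul, Hker_diag]

lemma kpow_succ (A : ℕ → ℕ → ℝ) (k : ℕ) (hk : 1 ≤ k) :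
    kpow A (k + 1) = kmul A (kpow A k) := by
  match k, hk with
  | n + 1, _ => rfl

lemma telescope (g : ℕ → ℝ) (a b : ℕ) (h : a ≤ b) :
    ∑ j ∈ Finset.Ico a b, (g (j + 1) - g j) = g b - g a := by
  induction b, h using Nat.le_induction with
  | base => simp
  | succ n hn ih =>
      rw [Finset.sum_Ico_succ_top (by omega), ih]
      ring

/-- `(k+1)·(b-a)·a^k ≤ b^(k+1) - a^(k+1)` for `0 ≤ a ≤ b`. -/
lemma pow_step (k : ℕ) (a b : ℝ) (ha : 0 ≤ a) (hab : a ≤ b) :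
    ((k : ℝ) + 1) * ((b - a) * a ^ k) ≤ b ^ (k + 1) - a ^ (k + 1) := by
  rw [← geom_sum₂_mul b a (k + 1)]
  have hsum : ((k : ℝ) + 1) * a ^ k ≤ ∑ i ∈ Finset.range (k + 1), b ^ i * a ^ (k - i) := by
    have heq : ∀ i ∈ Finset.range (k + 1), a ^ i * a ^ (k - i) = a ^ k := by
      intro i hi
      rw [← pow_add]
      congr 1
      have := Finset.mem_range.mp hi
      omega
    calc ((k : ℝ) + 1) * a ^ k = ∑ i ∈ Finset.range (k + 1), a ^ i * a ^ (k - i) := by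
          rw [Finset.sum_congr rfl heq, Finset.sum_const, Finset.card_range, nsmul_eq_mul]
          push_cast; ring
      _ ≤ _ := Finset.sum_le_sum fun i _ => by
          have h1 : a ^ i ≤ b ^ i := pow_le_pow_left₀ ha hab i
          have h2 : (0:ℝ) ≤ a ^ (k - i) := pow_nonneg ha _
          exact mul_le_mul_of_nonneg_right h1 h2
  calc ((k : ℝ) + 1) * ((b - a) * a ^ k) = (((k:ℝ)+1) * a ^ k) * (b - a) := by ring
    _ ≤ (∑ i ∈ Finset.range (k + 1), b ^ i * a ^ (k - i)) * (b - a) := by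
        apply mul_le_mul_of_nonneg_right hsum (by linarith)

/-- **Nested harmonic bound.**  For every `k ≥ 1`, horizon `T ≥ 1`, and
`0 ≤ τ < t ≤ T−1`, the `k`-fold kernel power of `H` satisfies
`(H^k)(t,τ) ≤ (1/(t+1)) · H_t^{k−1}/(k−1)!`. -/
theorem stmt_10
    (k T : ℕ) (hk : 1 ≤ k) (hT : 1 ≤ T)
    (t τ : ℕ) (hτt : τ < t) (htT : t ≤ T - 1) :
    kpow Hker k t τ
      ≤ (1 / ((t : ℝ) + 1)) * (harmonicR t) ^ (k - 1) / (Nat.factorial (k - 1) : ℝ) := by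
  clear hT htT T
  induction k, hk using Nat.le_induction generalizing t τ with
  | base =>
      simp only [kpow, Hker, if_pos hτt, Nat.sub_self, pow_zero, Nat.factorial_zero]
      norm_num
  | succ k hk ih =>
      have hpos : (0:ℝ) < (t : ℝ) + 1 := by positivity
      have hstep : kpow Hker (k + 1) t τ
          = (1 / ((t : ℝ) + 1)) * ∑ j ∈ Finset.Ico (τ + 1) t, kpow Hker k j τ := by
        rw [kpow_succ Hker k hk]
        unfold kmul
        rw [Finset.mul_sum]
        rw [show Finset.Icc τ t = insert τ (Finset.Icc (τ+1) t) by
          ext x; simp [Finset.mem_Icc, Finset.mem_insert]; omega]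
        rw [Finset.sum_insert (by simp)]
        rw [kpow_diag k hk τ, mul_zero, zero_add]
        rw [show Finset.Icc (τ+1) t = insert t (Finset.Ico (τ+1) t) by
          rw [Finset.Ico_insert_right (by omega)]]
        rw [Finset.sum_insert (by simp)]
        rw [Hker_diag t, zero_mul, zero_add]
        apply Finset.sum_congr rfl
        intro j hj
        have hjt : j < t := (Finset.mem_Ico.mp hj).2
        simp [Hker, hjt]
      rw [hstep]
      have key : ∑ j ∈ Finset.Ico (τ + 1) t, kpow Hker k j τ
          ≤ (harmonicR t) ^ k / (Nat.factorial k : ℝ) := by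
        have h1 : ∀ j ∈ Finset.Ico (τ + 1) t, kpow Hker k j τ
            ≤ (harmonicR (j+1) ^ k - harmonicR j ^ k) / (Nat.factorial k : ℝ) := by
          intro j hj
          obtain ⟨hj1, hj2⟩ := Finset.mem_Ico.mp hj
          have hjτ : τ < j := by omega
          calc kpow Hker k j τ
              ≤ (1 / ((j : ℝ) + 1)) * (harmonicR j) ^ (k - 1) / (Nat.factorial (k - 1) : ℝ) :=
                ih j τ hjτ
            _ ≤ (harmonicR (j+1) ^ k - harmonicR j ^ k) / (Nat.factorial k : ℝ) := by
                obtain ⟨p, hp⟩ : ∃ p, k = p + 1 := ⟨k - 1, by omega⟩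
                subst hp
                simp only [Nat.add_sub_cancel]
                rw [Nat.factorial_succ]
                have hd : harmonicR (j + 1) - harmonicR j = 1 / ((j : ℝ) + 1) := by
                  rw [harmonicR_succ]; ring
                have hps := pow_step p (harmonicR j) (harmonicR (j+1))
                  (harmonicR_nonneg j) (harmonicR_mono (Nat.le_succ j))
                rw [hd] at hps
                have hfac : (0:ℝ) < (Nat.factorial p : ℝ) := by
                  exact_mod_cast Nat.factorial_pos p
                rw [div_le_div_iff₀ hfac (by positivity)]
                push_cast
                calc 1 / ((j:ℝ)+1) * harmonicR j ^ p * (((p:ℝ)+1) * (Nat.factorial p : ℝ))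
                    = (((p:ℝ)+1) * (1 / ((j:ℝ)+1) * harmonicR j ^ p)) * (Nat.factorial p : ℝ) := by
                      ring
                  _ ≤ (harmonicR (j+1) ^ (p+1) - harmonicR j ^ (p+1)) * (Nat.factorial p : ℝ) := by
                      apply mul_le_mul_of_nonneg_right _ (le_of_lt hfac)
                      exact hps
        calc ∑ j ∈ Finset.Ico (τ + 1) t, kpow Hker k j τ
            ≤ ∑ j ∈ Finset.Ico (τ + 1) t,
                (harmonicR (j+1) ^ k - harmonicR j ^ k) / (Nat.factorial k : ℝ) :=
              Finset.sum_le_sum h1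
          _ = (∑ j ∈ Finset.Ico (τ + 1) t,
                (harmonicR (j+1) ^ k - harmonicR j ^ k)) / (Nat.factorial k : ℝ) := by
              rw [Finset.sum_div]
          _ = (harmonicR t ^ k - harmonicR (τ+1) ^ k) / (Nat.factorial k : ℝ) := by
              rw [telescope (fun j => harmonicR j ^ k) (τ+1) t (by omega)]
          _ ≤ (harmonicR t) ^ k / (Nat.factorial k : ℝ) := by
              gcongr
              exact sub_le_self _ (pow_nonneg (harmonicR_nonneg _) k)
      simp only [Nat.add_sub_cancel]
      calc (1 / ((t : ℝ) + 1)) * ∑ j ∈ Finset.Ico (τ + 1) t, kpow Hker k j τ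
          ≤ (1 / ((t : ℝ) + 1)) * ((harmonicR t) ^ k / (Nat.factorial k : ℝ)) :=
            mul_le_mul_of_nonneg_left key (by positivity)
        _ = (1 / ((t : ℝ) + 1)) * (harmonicR t) ^ k / (Nat.factorial k : ℝ) := by ring
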